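/- Assume |G| ≥ |P_f(Q) × {0,1}| and F = ⋃_{n≥0} G^{G^n}, where P_f(Q) is the collection of finite subsets of Q. Let Γ be a maximal consistent set in SLKVF + EXT, Γ_K = {φ : Kφ ∈ Γ}, L the set of all maximal consistent sets Δ with Γ_K ⊆ Δ, M_Γ = {C^{+Γ} : C finite ⊆ Q} where C^{+Γ} = {d : Kf(C,d) ∈ Γ}, and g : M_Γ × {0,1} → G an injection. Define the model M on worlds W = L × M_Γ × {0,1} by U(⟨Δ,C,i⟩,p) = 1 iff p ∈ Δ, and V(⟨Δ,C,i⟩,d) = V_p(⟨C,i⟩,d), where V_p(⟨X,i⟩,d) = g(∅^{+Γ},0) if Kv(d) ∈ Γ, g(X,0) if d ∈ X and Kv(d) ∉ Γ, and g(X,i) if d ∉ X. Then for every world ⟨Δ,C,i⟩ ∈ W and every formula φ of LKVF: φ ∈ Δ if and only if M,⟨Δ,C,i⟩ ⊨ φ. -/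

import Mathlib

open scoped Classical

/-! Single-agent language `LKVF` with operators `Kv`, `Kf` and `K`. -/

inductive Formula (P Q : Type) : Type where
  | top : Formula P Q
  | atom : P → Formula P Q
  | Kv : Q → Formula P Q
  | Kf : Finset Q → Q → Formula P Q
  | and : Formula P Q → Formula P Q → Formula P Q
  | not : Formula P Q → Formula P Q
  | K : Formula P Q → Formula P Q

namespace Formula

variable {P Q : Type}

/-- Material implication, defined from `and` and `not`. -/
def imp (φ ψ : Formula P Q) : Formula P Q := Formula.not (Formula.and φ (Formula.not ψ))

/-- Falsum. -/
def bot : Formula P Q := Formula.not Formula.top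

/-- Disjunction. -/
def or (φ ψ : Formula P Q) : Formula P Q :=
  Formula.not (Formula.and (Formula.not φ) (Formula.not ψ))

end Formula

variable {P Q G : Type}

/-- Finite conjunction of a list of formulas. -/
def conj : List (Formula P Q) → Formula P Q
  | [] => Formula.top
  | φ :: l => Formula.and φ (conj l)

/-- Finite disjunction of a list of formulas. -/
def disj : List (Formula P Q) → Formula P Q
  | [] => Formula.bot
  | φ :: l => Formula.or φ (disj l)

/-- `φ` is a propositional tautology: every Boolean valuation commuting with the
Boolean connectives makes it true. -/
def IsTaut (φ : Formula P Q) : Prop :=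
  ∀ v : Formula P Q → Bool,
    v Formula.top = true →
    (∀ α β, v (Formula.and α β) = (v α && v β)) →
    (∀ α, v (Formula.not α) = (! v α)) →
    v φ = true

section Axioms

variable (P Q : Type) [LinearOrder Q]

/-- `⋀_{d ∈ D} Kf(C,d)`. -/
def finConjKf (C D : Finset Q) : Formula P Q :=
  conj ((D.sort (· ≤ ·)).map fun d => Formula.Kf C d)

/-- `⋀_{c ∈ C} Kv(c)`. -/
def finConjKv (C : Finset Q) : Formula P Q :=
  conj ((C.sort (· ≤ ·)).map fun c => Formula.Kv c)

/-- The axioms of the base system `SLKVF`. -/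
inductive SLKVF : Formula P Q → Prop where
  | taut {φ : Formula P Q} : IsTaut φ → SLKVF φ
  | axK (φ ψ : Formula P Q) :
      SLKVF (Formula.imp (Formula.K (Formula.imp φ ψ))
        (Formula.imp (Formula.K φ) (Formula.K ψ)))
  | axT (φ : Formula P Q) : SLKVF (Formula.imp (Formula.K φ) φ)
  | ax4 (φ : Formula P Q) : SLKVF (Formula.imp (Formula.K φ) (Formula.K (Formula.K φ)))
  | ax5 (φ : Formula P Q) :
      SLKVF (Formula.imp (Formula.not (Formula.K φ)) (Formula.K (Formula.not (Formula.K φ))))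
  | kv4 (d : Q) : SLKVF (Formula.imp (Formula.Kv d) (Formula.K (Formula.Kv d)))
  | kv5 (d : Q) :
      SLKVF (Formula.imp (Formula.not (Formula.Kv d)) (Formula.K (Formula.not (Formula.Kv d))))
  | kf4 (C : Finset Q) (d : Q) :
      SLKVF (Formula.imp (Formula.Kf C d) (Formula.K (Formula.Kf C d)))
  | kf5 (C : Finset Q) (d : Q) :
      SLKVF (Formula.imp (Formula.not (Formula.Kf C d))
        (Formula.K (Formula.not (Formula.Kf C d))))
  | proj {C : Finset Q} {c : Q} : c ∈ C → SLKVF (Formula.Kf C c)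
  | tran (C D : Finset Q) (e : Q) :
      SLKVF (Formula.imp (Formula.and (finConjKf P Q C D) (Formula.Kf D e)) (Formula.Kf C e))
  | vf (C : Finset Q) (d : Q) :
      SLKVF (Formula.imp (Formula.and (finConjKv P Q C) (Formula.Kf C d)) (Formula.Kv d))

end Axioms

/-- Provability from an axiom set `Ax` with rules modus ponens and necessitation. -/
inductive Prov (Ax : Formula P Q → Prop) : Formula P Q → Prop where
  | ax {φ : Formula P Q} : Ax φ → Prov Ax φ
  | mp {φ ψ : Formula P Q} : Prov Ax (Formula.imp φ ψ) → Prov Ax φ → Prov Ax ψ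
  | nec {φ : Formula P Q} : Prov Ax φ → Prov Ax (Formula.K φ)

/-- `Γ` is consistent: no finite conjunction of its members proves `⊥`. -/
def Consistent (Ax : Formula P Q → Prop) (Γ : Set (Formula P Q)) : Prop :=
  ¬ ∃ L : List (Formula P Q), (∀ φ ∈ L, φ ∈ Γ) ∧ Prov Ax (Formula.imp (conj L) Formula.bot)

/-- `Γ` is maximal consistent. -/
def MCS (Ax : Formula P Q → Prop) (Γ : Set (Formula P Q)) : Prop :=
  Consistent Ax Γ ∧ ∀ φ : Formula P Q, φ ∈ Γ ∨ Formula.not φ ∈ Γ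

/-! Function domains: sets of finitary functions on the value domain `G`. -/

/-- A function domain on `G`: a set of `n`-ary functions on `G` for various `n`. -/
abbrev FnDom (G : Type) : Type := Set (Σ n : ℕ, (Fin n → G) → G)

/-- `F` contains all projection functions `id_{i,j}` for `0 < i ≤ j`. -/
def hasProjections (F : FnDom G) : Prop :=
  ∀ (j : ℕ) (k : Fin j), (⟨j, fun x => x k⟩ : Σ n : ℕ, (Fin n → G) → G) ∈ F

/-- `F` is closed under composition: for an `n`-ary `f ∈ F` with `n ≥ 1` and
`m`-ary `g₁, …, gₙ ∈ F`, the composition `f(g₁(·),…,gₙ(·))` is in `F`. -/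
def closedComp (F : FnDom G) : Prop :=
  ∀ (n m : ℕ), 0 < n → ∀ f : (Fin n → G) → G,
    (⟨n, f⟩ : Σ n : ℕ, (Fin n → G) → G) ∈ F →
    ∀ g : Fin n → (Fin m → G) → G,
      (∀ k, (⟨m, g k⟩ : Σ n : ℕ, (Fin n → G) → G) ∈ F) →
      (⟨m, fun x => f fun k => g k x⟩ : Σ n : ℕ, (Fin n → G) → G) ∈ F

/-- The tuple of values of the variables of the finite set `C`, in the fixed
(increasing) order of its elements. -/
def tupleV [LinearOrder Q] (v : Q → G) (C : Finset Q) : Fin C.card → G :=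
  fun k => v ((C.sort (· ≤ ·)).get (Fin.cast (Finset.length_sort (s := C) (· ≤ ·)).symm k))

/-- A model of `LKVF`: worlds, an assignment of propositional letters and an
assignment of values to variables. -/
structure Model (P Q G : Type) : Type 1 where
  W : Type
  U : W → P → Prop
  V : W → Q → G

variable [LinearOrder Q]

/-- Truth of a formula at a world of a model, relative to a function domain `F`. -/
def sat (F : FnDom G) (M : Model P Q G) (w : M.W) : Formula P Q → Prop
  | Formula.top => True
  | Formula.atom p => M.U w p
  | Formula.Kv d => ∃ x : G, ∀ w' : M.W, M.V w' d = x
  | Formula.Kf C d =>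
      ∃ f : (Fin C.card → G) → G,
        (⟨C.card, f⟩ : Σ n : ℕ, (Fin n → G) → G) ∈ F ∧
        ∀ w' : M.W, M.V w' d = f (tupleV (M.V w') C)
  | Formula.and φ ψ => sat F M w φ ∧ sat F M w ψ
  | Formula.not φ => ¬ sat F M w φ
  | Formula.K φ => ∀ w' : M.W, sat F M w' φ

/-- Validity over all models built on the value domain `G` and function domain `F`. -/
def Valid (F : FnDom G) (φ : Formula P Q) : Prop :=
  ∀ (M : Model P Q G) (w : M.W), sat F M w φ

/-! STATEMENT 6: truth lemma for the canonical model over the full function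
domain, built from a maximal consistent set `Γ` in `SLKVF + EXT`. -/

/-- The axiom system `SLKVF + EXT`. -/
def AxExt (P Q : Type) [LinearOrder Q] : Formula P Q → Prop := fun φ =>
  SLKVF P Q φ ∨ ∃ (d : Q) (C : Finset Q), φ = Formula.imp (Formula.Kv d) (Formula.Kf C d)

/-- `C^{+Γ} = {d : Kf(C,d) ∈ Γ}`. -/
def plusSet {P Q : Type} (Γ : Set (Formula P Q)) (C : Finset Q) : Set Q :=
  {d : Q | Formula.Kf C d ∈ Γ}

/-- `M_Γ`, the collection of all finitely generated closed sets. -/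
def MGamma {P Q : Type} (Γ : Set (Formula P Q)) : Set (Set Q) :=
  {X : Set Q | ∃ C : Finset Q, X = plusSet Γ C}

/-- The valuation `V_p`: `g(∅^{+Γ},0)` if `Kv(d) ∈ Γ`, `g(X,0)` if `d ∈ X` and
`Kv(d) ∉ Γ`, and `g(X,i)` if `d ∉ X`. -/
noncomputable def Vp {P Q G : Type} (Γ : Set (Formula P Q)) (g : Set Q → Bool → G)
    (X : Set Q) (i : Bool) (d : Q) : G :=
  if Formula.Kv d ∈ Γ then g (plusSet Γ (∅ : Finset Q)) false
  else if d ∈ X then g X false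
  else g X i

/-- `L`: the maximal consistent sets `Δ` with `Γ_K ⊆ Δ`. -/
abbrev LWorlds (P Q : Type) [LinearOrder Q] (Γ : Set (Formula P Q)) : Type :=
  {Δ : Set (Formula P Q) // MCS (AxExt P Q) Δ ∧ {φ : Formula P Q | Formula.K φ ∈ Γ} ⊆ Δ}

/-- The canonical model on `W = L × M_Γ × {0,1}`. -/
noncomputable def canonModel (P Q G : Type) [LinearOrder Q]
    (Γ : Set (Formula P Q)) (g : Set Q → Bool → G) : Model P Q G where
  W := LWorlds P Q Γ × {X : Set Q // X ∈ MGamma Γ} × Bool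
  U := fun w p => Formula.atom p ∈ w.1.1
  V := fun w d => Vp Γ g w.2.1.1 w.2.2 d

/-!
Formulas `Kv(d)`, `Kf(C,d)` and `Kφ` are introspective (axioms 4 and 5), so whether they belong
to `Δ` is decided by `Γ`; the `K` case of the induction on `φ` is then the usual canonical-model
argument, via Lindenbaum's lemma applied to `Γ_K ∪ {¬φ}`.

The heart of the proof is `Kf(C,d)`, and `Kv(d)` is the special case `C = ∅`. Over the full
function domain, `Kf(C,d)` holds iff the values of `C` at a world determine the value of `d`.
If `Kf(C,d) ∈ Γ` and `Kv(d) ∉ Γ`, then by VF some `c ∈ C` has `Kv(c) ∉ Γ`, and its value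
`g(X,·)` recovers `X`; if moreover `d ∉ X = D^{+Γ}`, then by TRAN and EXT some `c ∈ C` lies
outside `X`, and its value `g(X,i)` recovers `i`. Conversely, if `Kf(C,d) ∉ Γ`, the worlds with
second component `C^{+Γ}` and bits `0` and `1` agree on `C` (by PROJ) but not on `d`.
-/

class ExtendsSLKVF {P Q : Type} [LinearOrder Q] (Ax : Formula P Q → Prop) : Prop where
  of_SLKVF : ∀ {φ : Formula P Q}, SLKVF P Q φ → Ax φ

instance {P Q : Type} [LinearOrder Q] : ExtendsSLKVF (AxExt P Q) :=
  ⟨Or.inl⟩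

section Propositional

variable {P Q : Type} {Ax : Formula P Q → Prop}

theorem consistent_sUnion_of_isChain {c : Set (Set (Formula P Q))}
    (hc : ∀ S ∈ c, Consistent Ax S) (hchain : IsChain (· ⊆ ·) c) (hne : c.Nonempty) :
    Consistent Ax (⋃₀ c) := by
  rintro ⟨L, hL, hprov⟩
  obtain ⟨S, hS, hLS⟩ := hchain.directedOn.exists_mem_subset_of_finite_of_subset_sUnion hne
    (List.finite_toSet L) fun φ hφ => hL φ hφ
  exact hc S hS ⟨L, fun φ hφ => hLS hφ, hprov⟩

variable [LinearOrder Q] [ExtendsSLKVF Ax]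

theorem Prov.of_isTaut {φ : Formula P Q} (h : IsTaut φ) : Prov Ax φ :=
  .ax (ExtendsSLKVF.of_SLKVF (.taut h))

theorem Prov.of_SLKVF {φ : Formula P Q} (h : SLKVF P Q φ) : Prov Ax φ :=
  .ax (ExtendsSLKVF.of_SLKVF h)

theorem prov_conj_append_imp (L₁ L₂ : List (Formula P Q)) :
    Prov Ax ((conj (L₁ ++ L₂)).imp ((conj L₁).and (conj L₂))) := by
  induction L₁ with
  | nil =>
    refine .of_isTaut fun v hT hA hN => ?_
    simp only [List.nil_append, conj, Formula.imp, hA, hN, hT]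
    cases v (conj L₂) <;> rfl
  | cons ψ l ih =>
    refine (Prov.of_isTaut fun v hT hA hN => ?_).mp ih
    simp only [List.cons_append, conj, Formula.imp, hA, hN]
    cases v ψ <;> cases v (conj (l ++ L₂)) <;> cases v (conj l) <;> cases v (conj L₂) <;> rfl

theorem exists_prov_and_conj_imp_conj {φ : Formula P Q} {S : Set (Formula P Q)} :
    ∀ L : List (Formula P Q), (∀ ψ ∈ L, ψ ∈ insert φ S) →
      ∃ L' : List (Formula P Q), (∀ ψ ∈ L', ψ ∈ S) ∧ Prov Ax ((φ.and (conj L')).imp (conj L))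
  | [], _ => by
    refine ⟨[], by simp, .of_isTaut fun v hT hA hN => ?_⟩
    simp only [conj, Formula.imp, hA, hN, hT]
    cases v φ <;> rfl
  | ψ :: l, hL => by
    obtain ⟨L', hL'S, hprov⟩ :=
      exists_prov_and_conj_imp_conj l fun χ hχ => hL χ (List.mem_cons_of_mem ψ hχ)
    rcases hL ψ List.mem_cons_self with rfl | hψS
    · refine ⟨L', hL'S, (Prov.of_isTaut fun v hT hA hN => ?_).mp hprov⟩
      simp only [conj, Formula.imp, hA, hN]
      cases v ψ <;> cases v (conj L') <;> cases v (conj l) <;> rfl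
    · refine ⟨ψ :: L', ?_, (Prov.of_isTaut fun v hT hA hN => ?_).mp hprov⟩
      · simpa only [List.mem_cons, forall_eq_or_imp] using ⟨hψS, hL'S⟩
      simp only [conj, Formula.imp, hA, hN]
      cases v φ <;> cases v ψ <;> cases v (conj L') <;> cases v (conj l) <;> rfl

theorem exists_prov_conj_imp_not_of_not_consistent_insert {φ : Formula P Q}
    {S : Set (Formula P Q)} (h : ¬ Consistent Ax (insert φ S)) :
    ∃ L : List (Formula P Q), (∀ ψ ∈ L, ψ ∈ S) ∧ Prov Ax ((conj L).imp φ.not) := by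
  obtain ⟨L₀, hL₀, hbot⟩ := not_not.mp h
  obtain ⟨L, hLS, hprov⟩ := exists_prov_and_conj_imp_conj (Ax := Ax) L₀ hL₀
  refine ⟨L, hLS, ((Prov.of_isTaut fun v hT hA hN => ?_).mp hprov).mp hbot⟩
  simp only [Formula.imp, Formula.bot, hA, hN, hT]
  cases v φ <;> cases v (conj L) <;> cases v (conj L₀) <;> rfl

theorem Consistent.insert_or_insert_not {S : Set (Formula P Q)} (hS : Consistent Ax S)
    (φ : Formula P Q) : Consistent Ax (insert φ S) ∨ Consistent Ax (insert φ.not S) := by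
  by_contra! h
  obtain ⟨L₁, hL₁S, h₁⟩ := exists_prov_conj_imp_not_of_not_consistent_insert h.1
  obtain ⟨L₂, hL₂S, h₂⟩ := exists_prov_conj_imp_not_of_not_consistent_insert h.2
  refine hS ⟨L₁ ++ L₂, fun ψ hψ => (List.mem_append.mp hψ).elim (hL₁S ψ) (hL₂S ψ), ?_⟩
  refine (((Prov.of_isTaut fun v hT hA hN => ?_).mp (prov_conj_append_imp L₁ L₂)).mp h₁).mp h₂
  simp only [Formula.imp, Formula.bot, hA, hN, hT]
  cases v φ <;> cases v (conj (L₁ ++ L₂)) <;> cases v (conj L₁) <;> cases v (conj L₂) <;> rfl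

theorem exists_mcs_superset {S : Set (Formula P Q)} (hS : Consistent Ax S) :
    ∃ Δ, MCS Ax Δ ∧ S ⊆ Δ := by
  obtain ⟨Δ, hSΔ, hmax⟩ := zorn_subset_nonempty {T | Consistent Ax T}
    (fun c hc hchain hne => ⟨⋃₀ c, consistent_sUnion_of_isChain hc hchain hne,
      fun _ => Set.subset_sUnion_of_mem⟩) S hS
  exact ⟨Δ, ⟨hmax.prop, fun φ => (hmax.prop.insert_or_insert_not φ).imp
    hmax.mem_of_prop_insert hmax.mem_of_prop_insert⟩, hSΔ⟩

namespace MCS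

variable {Δ : Set (Formula P Q)}

theorem mem_of_prov_conj_imp (hΔ : MCS Ax Δ) {L : List (Formula P Q)} {φ : Formula P Q}
    (hL : ∀ ψ ∈ L, ψ ∈ Δ) (h : Prov Ax ((conj L).imp φ)) : φ ∈ Δ := by
  refine (hΔ.2 φ).resolve_right fun hnot => hΔ.1 ⟨φ.not :: L, ?_, ?_⟩
  · simpa only [List.mem_cons, forall_eq_or_imp] using ⟨hnot, hL⟩
  refine (Prov.of_isTaut fun v hT hA hN => ?_).mp h
  simp only [conj, Formula.imp, Formula.bot, hA, hN, hT]
  cases v φ <;> cases v (conj L) <;> rfl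

theorem mem_of_prov (hΔ : MCS Ax Δ) {φ : Formula P Q} (h : Prov Ax φ) : φ ∈ Δ := by
  refine hΔ.mem_of_prov_conj_imp (L := []) (by simp) ((Prov.of_isTaut fun v hT hA hN => ?_).mp h)
  simp only [conj, Formula.imp, hA, hN, hT]
  cases v φ <;> rfl

theorem top_mem (hΔ : MCS Ax Δ) : Formula.top ∈ Δ :=
  hΔ.mem_of_prov (.of_isTaut fun _ hT _ _ => hT)

theorem mem_not_iff (hΔ : MCS Ax Δ) {φ : Formula P Q} : φ.not ∈ Δ ↔ φ ∉ Δ := by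
  refine ⟨fun hnot hφ => hΔ.1 ⟨[φ, φ.not], ?_, .of_isTaut fun v hT hA hN => ?_⟩,
    (hΔ.2 φ).resolve_left⟩
  · simp [hφ, hnot]
  simp only [conj, Formula.imp, Formula.bot, hA, hN, hT]
  cases v φ <;> rfl

theorem mem_and_iff (hΔ : MCS Ax Δ) {φ ψ : Formula P Q} :
    φ.and ψ ∈ Δ ↔ φ ∈ Δ ∧ ψ ∈ Δ := by
  refine ⟨fun h => ⟨hΔ.mem_of_prov_conj_imp (L := [φ.and ψ]) (by simpa) ?_,
    hΔ.mem_of_prov_conj_imp (L := [φ.and ψ]) (by simpa) ?_⟩,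
    fun h => hΔ.mem_of_prov_conj_imp (L := [φ, ψ]) (by simpa) ?_⟩ <;>
  refine .of_isTaut fun v hT hA hN => ?_ <;>
  simp only [conj, Formula.imp, hA, hN, hT] <;>
  cases v φ <;> cases v ψ <;> rfl

theorem mem_imp_iff (hΔ : MCS Ax Δ) {φ ψ : Formula P Q} :
    φ.imp ψ ∈ Δ ↔ (φ ∈ Δ → ψ ∈ Δ) := by
  rw [Formula.imp, hΔ.mem_not_iff, hΔ.mem_and_iff, hΔ.mem_not_iff]
  tauto

theorem mem_of_prov_imp (hΔ : MCS Ax Δ) {φ ψ : Formula P Q} (h : Prov Ax (φ.imp ψ))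
    (hφ : φ ∈ Δ) : ψ ∈ Δ :=
  hΔ.mem_imp_iff.mp (hΔ.mem_of_prov h) hφ

theorem mem_conj_iff (hΔ : MCS Ax Δ) {L : List (Formula P Q)} :
    conj L ∈ Δ ↔ ∀ φ ∈ L, φ ∈ Δ := by
  induction L with
  | nil => simpa [conj] using hΔ.top_mem
  | cons ψ l ih => simp only [conj, hΔ.mem_and_iff, ih, List.mem_cons, forall_eq_or_imp]

theorem mem_conj_map_sort_iff (hΔ : MCS Ax Δ) (f : Q → Formula P Q) (C : Finset Q) :
    conj ((C.sort (· ≤ ·)).map f) ∈ Δ ↔ ∀ c ∈ C, f c ∈ Δ := by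
  simp only [hΔ.mem_conj_iff, List.mem_map, Finset.mem_sort, forall_exists_index, and_imp,
    forall_apply_eq_imp_iff₂]

end MCS

end Propositional

section Knowledge

variable {P Q : Type} [LinearOrder Q] {Ax : Formula P Q → Prop} [ExtendsSLKVF Ax]
  {Γ : Set (Formula P Q)}

theorem MCS.K_mem_of_K_imp_mem (hΓ : MCS Ax Γ) {φ ψ : Formula P Q}
    (himp : Formula.K (φ.imp ψ) ∈ Γ) (hφ : Formula.K φ ∈ Γ) : Formula.K ψ ∈ Γ :=
  hΓ.mem_imp_iff.mp (hΓ.mem_of_prov_imp (.of_SLKVF (.axK φ ψ)) himp) hφ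

theorem MCS.K_conj_mem (hΓ : MCS Ax Γ) {L : List (Formula P Q)}
    (hL : ∀ φ ∈ L, Formula.K φ ∈ Γ) : Formula.K (conj L) ∈ Γ := by
  induction L with
  | nil => exact hΓ.mem_of_prov (.nec (.of_isTaut fun _ hT _ _ => hT))
  | cons ψ l ih =>
    simp only [List.mem_cons, forall_eq_or_imp] at hL
    have hpair : Prov Ax (Formula.K (ψ.imp ((conj l).imp (ψ.and (conj l))))) := by
      refine .nec (.of_isTaut fun v hT hA hN => ?_)
      simp only [Formula.imp, hA, hN]
      cases v ψ <;> cases v (conj l) <;> rfl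
    exact hΓ.K_mem_of_K_imp_mem (hΓ.K_mem_of_K_imp_mem (hΓ.mem_of_prov hpair) hL.1) (ih hL.2)

theorem MCS.consistent_insert_not_of_K_not_mem (hΓ : MCS Ax Γ) {φ : Formula P Q}
    (h : Formula.K φ ∉ Γ) : Consistent Ax (insert φ.not {ψ | Formula.K ψ ∈ Γ}) := by
  intro hincons
  obtain ⟨L, hLK, hprov⟩ :=
    exists_prov_conj_imp_not_of_not_consistent_insert (not_not_intro hincons)
  have hLφ : Prov Ax ((conj L).imp φ) := by
    refine (Prov.of_isTaut fun v hT hA hN => ?_).mp hprov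
    simp only [Formula.imp, hA, hN]
    cases v φ <;> cases v (conj L) <;> rfl
  exact h (hΓ.K_mem_of_K_imp_mem (hΓ.mem_of_prov hLφ.nec) (hΓ.K_conj_mem hLK))

theorem MCS.K_mem_iff (hΓ : MCS Ax Γ) (φ : Formula P Q) :
    Formula.K φ ∈ Γ ↔ ∀ Δ, MCS Ax Δ → {ψ | Formula.K ψ ∈ Γ} ⊆ Δ → φ ∈ Δ := by
  refine ⟨fun hφ Δ _ hΓΔ => hΓΔ hφ, fun h => ?_⟩
  by_contra hφ
  obtain ⟨Δ, hΔ, hsub⟩ := exists_mcs_superset (hΓ.consistent_insert_not_of_K_not_mem hφ)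
  exact (hΔ.mem_not_iff.mp (hsub (Set.mem_insert _ _))) (h Δ hΔ fun ψ hψ => hsub (.inr hψ))

theorem MCS.mem_iff_of_introspective (hΓ : MCS Ax Γ) {Δ : Set (Formula P Q)} (hΔ : MCS Ax Δ)
    (hΓΔ : {ψ | Formula.K ψ ∈ Γ} ⊆ Δ) {χ : Formula P Q}
    (h4 : Prov Ax (χ.imp (Formula.K χ))) (h5 : Prov Ax (χ.not.imp (Formula.K χ.not))) :
    χ ∈ Δ ↔ χ ∈ Γ := by
  refine ⟨fun hΔχ => by_contra fun hΓχ => ?_, fun hΓχ => hΓΔ (hΓ.mem_of_prov_imp h4 hΓχ)⟩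
  exact hΔ.mem_not_iff.mp (hΓΔ (hΓ.mem_of_prov_imp h5 (hΓ.mem_not_iff.mpr hΓχ))) hΔχ

theorem MCS.Kf_mem_of_mem (hΓ : MCS Ax Γ) {C : Finset Q} {c : Q} (hc : c ∈ C) :
    Formula.Kf C c ∈ Γ :=
  hΓ.mem_of_prov (.of_SLKVF (.proj hc))

theorem MCS.Kf_mem_trans (hΓ : MCS Ax Γ) {C D : Finset Q} {d : Q}
    (hDC : ∀ c ∈ C, Formula.Kf D c ∈ Γ) (hCd : Formula.Kf C d ∈ Γ) : Formula.Kf D d ∈ Γ :=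
  hΓ.mem_of_prov_imp (.of_SLKVF (.tran D C d))
    (hΓ.mem_and_iff.mpr ⟨(hΓ.mem_conj_map_sort_iff _ C).mpr hDC, hCd⟩)

theorem MCS.Kv_mem_of_Kf_mem (hΓ : MCS Ax Γ) {C : Finset Q} {d : Q}
    (hC : ∀ c ∈ C, Formula.Kv c ∈ Γ) (hCd : Formula.Kf C d ∈ Γ) : Formula.Kv d ∈ Γ :=
  hΓ.mem_of_prov_imp (.of_SLKVF (.vf C d))
    (hΓ.mem_and_iff.mpr ⟨(hΓ.mem_conj_map_sort_iff _ C).mpr hC, hCd⟩)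

end Knowledge

section Ext

variable {P Q : Type} [LinearOrder Q] {Γ : Set (Formula P Q)}

theorem MCS.Kf_mem_of_Kv_mem (hΓ : MCS (AxExt P Q) Γ) (C : Finset Q) {d : Q}
    (h : Formula.Kv d ∈ Γ) : Formula.Kf C d ∈ Γ :=
  hΓ.mem_of_prov_imp (.ax (Or.inr ⟨d, C, rfl⟩)) h

theorem MCS.Kv_mem_iff_Kf_empty_mem (hΓ : MCS (AxExt P Q) Γ) (d : Q) :
    Formula.Kv d ∈ Γ ↔ Formula.Kf ∅ d ∈ Γ :=
  ⟨hΓ.Kf_mem_of_Kv_mem ∅, hΓ.Kv_mem_of_Kf_mem (by simp)⟩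

end Ext

section Semantics

variable {P Q G : Type} [LinearOrder Q]

theorem tupleV_eq_tupleV_iff (v v' : Q → G) (C : Finset Q) :
    tupleV v C = tupleV v' C ↔ ∀ c ∈ C, v c = v' c := by
  refine ⟨fun h c hc => ?_,
    fun h => funext fun k => h _ ((Finset.mem_sort _).mp (List.get_mem _ _))⟩
  obtain ⟨k, hk⟩ := List.get_of_mem ((Finset.mem_sort (· ≤ ·)).mpr hc)
  have := congrFun h (Fin.cast (Finset.length_sort (· ≤ ·)) k)
  simpa only [tupleV, Fin.cast_cast, Fin.cast_eq_self, hk] using this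

theorem sat_Kv_iff (F : FnDom G) (M : Model P Q G) (w : M.W) (d : Q) :
    sat F M w (Formula.Kv d) ↔ ∀ w₁ w₂ : M.W, M.V w₁ d = M.V w₂ d :=
  ⟨fun ⟨_, hx⟩ w₁ w₂ => (hx w₁).trans (hx w₂).symm, fun h => ⟨M.V w d, fun w' => h w' w⟩⟩

theorem sat_univ_Kf_iff (M : Model P Q G) (w : M.W) (C : Finset Q) (d : Q) :
    sat Set.univ M w (Formula.Kf C d) ↔
      ∀ w₁ w₂ : M.W, (∀ c ∈ C, M.V w₁ c = M.V w₂ c) → M.V w₁ d = M.V w₂ d := by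
  have : Nonempty G := ⟨M.V w d⟩
  simp only [sat, Set.mem_univ, true_and, ← tupleV_eq_tupleV_iff]
  rw [← Function.FactorsThrough, Function.factorsThrough_iff]
  simp only [funext_iff, Function.comp_apply]

theorem sat_univ_Kv_iff_sat_univ_Kf_empty (M : Model P Q G) (w : M.W) (d : Q) :
    sat Set.univ M w (Formula.Kv d) ↔ sat Set.univ M w (Formula.Kf ∅ d) := by
  simp [sat_Kv_iff, sat_univ_Kf_iff]

end Semantics

section Canonical

variable {P Q G : Type} {Γ : Set (Formula P Q)} {g : Set Q → Bool → G}

theorem Vp_of_Kv_not_mem {X : Set Q} {i : Bool} {c : Q} (hc : Formula.Kv c ∉ Γ) :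
    Vp Γ g X i c = g X (if c ∈ X then false else i) := by
  simp only [Vp, if_neg hc]
  split_ifs <;> rfl

variable [LinearOrder Q]

theorem Vp_eq_of_Kf_mem (hΓ : MCS (AxExt P Q) Γ)
    (hg : ∀ X ∈ MGamma Γ, ∀ X' ∈ MGamma Γ, ∀ i i' : Bool, g X i = g X' i' → X = X' ∧ i = i')
    {C : Finset Q} {d : Q} (hCd : Formula.Kf C d ∈ Γ) {X X' : Set Q} (hX : X ∈ MGamma Γ)
    (hX' : X' ∈ MGamma Γ) {i i' : Bool} (hC : ∀ c ∈ C, Vp Γ g X i c = Vp Γ g X' i' c) :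
    Vp Γ g X i d = Vp Γ g X' i' d := by
  by_cases hd : Formula.Kv d ∈ Γ
  · simp [Vp, hd]
  obtain ⟨c₀, hc₀, hc₀Kv⟩ : ∃ c ∈ C, Formula.Kv c ∉ Γ := by
    by_contra! h
    exact hd (hΓ.Kv_mem_of_Kf_mem h hCd)
  obtain rfl : X = X' := by
    have := hC c₀ hc₀
    rw [Vp_of_Kv_not_mem hc₀Kv, Vp_of_Kv_not_mem hc₀Kv] at this
    exact (hg X hX X' hX' _ _ this).1
  by_cases hdX : d ∈ X
  · simp [Vp, hd, hdX]
  obtain ⟨D, rfl⟩ := hX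
  obtain ⟨c₁, hc₁, hc₁D, hc₁Kv⟩ : ∃ c ∈ C, c ∉ plusSet Γ D ∧ Formula.Kv c ∉ Γ := by
    by_contra! h
    refine hdX (hΓ.Kf_mem_trans (fun c hc => ?_) hCd)
    by_cases hcD : c ∈ plusSet Γ D
    · exact hcD
    · exact hΓ.Kf_mem_of_Kv_mem D (h c hc hcD)
  obtain rfl : i = i' := by
    have := hC c₁ hc₁
    rw [Vp_of_Kv_not_mem hc₁Kv, Vp_of_Kv_not_mem hc₁Kv, if_neg hc₁D, if_neg hc₁D] at this
    exact (hg _ ⟨D, rfl⟩ _ ⟨D, rfl⟩ _ _ this).2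
  rfl

theorem exists_Vp_separating_of_Kf_not_mem (hΓ : MCS (AxExt P Q) Γ)
    (hg : ∀ X ∈ MGamma Γ, ∀ X' ∈ MGamma Γ, ∀ i i' : Bool, g X i = g X' i' → X = X' ∧ i = i')
    {C : Finset Q} {d : Q} (hCd : Formula.Kf C d ∉ Γ) :
    ∃ X ∈ MGamma Γ, (∀ c ∈ C, Vp Γ g X false c = Vp Γ g X true c) ∧
      Vp Γ g X false d ≠ Vp Γ g X true d := by
  refine ⟨plusSet Γ C, ⟨C, rfl⟩, fun c hc => ?_, fun h => ?_⟩
  · by_cases hcKv : Formula.Kv c ∈ Γ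
    · simp [Vp, hcKv]
    · have hcC : c ∈ plusSet Γ C := hΓ.Kf_mem_of_mem hc
      rw [Vp_of_Kv_not_mem hcKv, Vp_of_Kv_not_mem hcKv, if_pos hcC, if_pos hcC]
  · have hdKv : Formula.Kv d ∉ Γ := fun hd => hCd (hΓ.Kf_mem_of_Kv_mem C hd)
    have hdC : d ∉ plusSet Γ C := hCd
    rw [Vp_of_Kv_not_mem hdKv, Vp_of_Kv_not_mem hdKv, if_neg hdC, if_neg hdC] at h
    exact Bool.false_ne_true (hg _ ⟨C, rfl⟩ _ ⟨C, rfl⟩ _ _ h).2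

theorem Kf_mem_iff_sat (hΓ : MCS (AxExt P Q) Γ)
    (hg : ∀ X ∈ MGamma Γ, ∀ X' ∈ MGamma Γ, ∀ i i' : Bool, g X i = g X' i' → X = X' ∧ i = i')
    (w : (canonModel P Q G Γ g).W) (C : Finset Q) (d : Q) :
    Formula.Kf C d ∈ Γ ↔ sat Set.univ (canonModel P Q G Γ g) w (Formula.Kf C d) := by
  rw [sat_univ_Kf_iff]
  refine ⟨fun hCd w₁ w₂ hC => Vp_eq_of_Kf_mem hΓ hg hCd w₁.2.1.2 w₂.2.1.2 hC, fun h => ?_⟩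
  by_contra hCd
  obtain ⟨X, hX, hC, hd⟩ := exists_Vp_separating_of_Kf_not_mem hΓ hg hCd
  exact hd (h ⟨w.1, ⟨X, hX⟩, false⟩ ⟨w.1, ⟨X, hX⟩, true⟩ hC)

end Canonical

theorem statement6_general (P Q G : Type) [LinearOrder Q]
    (Γ : Set (Formula P Q)) (hΓ : MCS (AxExt P Q) Γ)
    (g : Set Q → Bool → G)
    (hg : ∀ X ∈ MGamma Γ, ∀ X' ∈ MGamma Γ, ∀ i i' : Bool,
      g X i = g X' i' → X = X' ∧ i = i') :
    ∀ (Δ : LWorlds P Q Γ) (X : {X : Set Q // X ∈ MGamma Γ}) (i : Bool)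
      (φ : Formula P Q),
      φ ∈ Δ.1 ↔ sat (Set.univ : FnDom G) (canonModel P Q G Γ g) ⟨Δ, X, i⟩ φ := by
  intro Δ X i φ
  induction φ generalizing Δ X i with
  | top => simpa [sat] using Δ.2.1.top_mem
  | atom p => rfl
  | Kv d =>
    rw [hΓ.mem_iff_of_introspective Δ.2.1 Δ.2.2 (.of_SLKVF (.kv4 d)) (.of_SLKVF (.kv5 d)),
      hΓ.Kv_mem_iff_Kf_empty_mem]
    exact (Kf_mem_iff_sat hΓ hg _ ∅ d).trans (sat_univ_Kv_iff_sat_univ_Kf_empty _ _ d).symm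
  | Kf C d =>
    rw [hΓ.mem_iff_of_introspective Δ.2.1 Δ.2.2 (.of_SLKVF (.kf4 C d)) (.of_SLKVF (.kf5 C d))]
    exact Kf_mem_iff_sat hΓ hg _ C d
  | and φ ψ ihφ ihψ => rw [Δ.2.1.mem_and_iff, ihφ Δ X i, ihψ Δ X i]; rfl
  | not φ ih => rw [Δ.2.1.mem_not_iff, ih Δ X i]; rfl
  | K φ ih =>
    rw [hΓ.mem_iff_of_introspective Δ.2.1 Δ.2.2 (.of_SLKVF (.ax4 φ)) (.of_SLKVF (.ax5 φ)),
      hΓ.K_mem_iff]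
    exact ⟨fun h w => (ih w.1 w.2.1 w.2.2).1 (h w.1.1 w.1.2.1 w.1.2.2),
      fun h Δ' hΔ' hΓΔ' => (ih ⟨Δ', hΔ', hΓΔ'⟩ X i).2 (h ⟨⟨Δ', hΔ', hΓΔ'⟩, X, i⟩)⟩

theorem statement6 (P Q G : Type) [Countable P] [Infinite P] [LinearOrder Q]
    (hcard : Nonempty ((Finset Q × Bool) ↪ G))
    (Γ : Set (Formula P Q)) (hΓ : MCS (AxExt P Q) Γ)
    (g : Set Q → Bool → G)
    (hg : ∀ X ∈ MGamma Γ, ∀ X' ∈ MGamma Γ, ∀ i i' : Bool,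
      g X i = g X' i' → X = X' ∧ i = i') :
    ∀ (Δ : LWorlds P Q Γ) (X : {X : Set Q // X ∈ MGamma Γ}) (i : Bool)
      (φ : Formula P Q),
      φ ∈ Δ.1 ↔ sat (Set.univ : FnDom G) (canonModel P Q G Γ g) ⟨Δ, X, i⟩ φ :=
  statement6_general P Q G Γ hΓ g hg
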